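/- Let d ≥ 1, let θ0 ∈ ℝ^d be a unit vector, let M > 0, δ > 0, and let μ be a measure on ℝ^d satisfying μ(A) ≤ M·λ(A) for every Borel set A (λ = Lebesgue measure) and μ({x : ‖x‖ > 1}) = 0. Define the envelope function ḡ_δ(x) := ‖x‖·δ if |⟪x,θ0⟫| ≤ ‖x‖·δ and ḡ_δ(x) := 0 otherwise. Then ∫ ḡ_δ(x)² dμ(x) ≤ 2M·V_{d−1}·δ³, where V_{d−1} is the Lebesgue volume of the closed unit ball of ℝ^{d−1} (with V_0 := 1). -/

import Mathlib

/-!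
Since `‖x‖ ≤ 1` for `μ`-a.e. `x`, the squared envelope is at most `δ²` times the indicator of the
slab `{x | |⟪x, θ0⟫| ≤ δ} ∩ closedBall 0 1`. In an orthonormal basis whose first vector is `θ0`,
this slab lies in `[-δ, δ] × closedBall 0 1 ⊆ ℝ × ℝ^{d-1}`, of volume `2δ·V_{d-1}`, so the density
bound gives `μ(slab) ≤ 2MδV_{d-1}`.
-/

open MeasureTheory
open scoped RealInnerProductSpace

namespace EuclideanSpace

lemma norm_sq_eq_sq_apply_zero_add_norm_sq_tail {n : ℕ} (x : EuclideanSpace ℝ (Fin (n + 1))) :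
    ‖x‖ ^ 2 = x 0 ^ 2 + ‖WithLp.toLp 2 (Fin.tail x.ofLp)‖ ^ 2 := by
  simp [EuclideanSpace.norm_sq_eq, Fin.sum_univ_succ, Fin.tail]

lemma measurePreserving_apply_zero_prod_tail {n : ℕ} : MeasurePreserving
    (fun x : EuclideanSpace ℝ (Fin (n + 1)) => (x 0, WithLp.toLp 2 (Fin.tail x.ofLp))) := by
  convert ((MeasurePreserving.id volume).prod (PiLp.volume_preserving_toLp (Fin n))).comp
      ((volume_preserving_piFinSuccAbove (fun _ : Fin (n + 1) => ℝ) 0).comp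
        (PiLp.volume_preserving_ofLp (Fin (n + 1)))) using 1
  · ext x <;> simp [Fin.tail]
  · exact Measure.volume_eq_prod _ _

lemma volume_abs_apply_zero_le_inter_closedBall_le {n : ℕ} (δ r : ℝ) :
    volume ({x : EuclideanSpace ℝ (Fin (n + 1)) | |x 0| ≤ δ} ∩ Metric.closedBall 0 r)
      ≤ ENNReal.ofReal (2 * δ) * volume (Metric.closedBall (0 : EuclideanSpace ℝ (Fin n)) r) := by
  have hsub : {x : EuclideanSpace ℝ (Fin (n + 1)) | |x 0| ≤ δ} ∩ Metric.closedBall 0 r ⊆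
      (fun x => (x 0, WithLp.toLp 2 (Fin.tail x.ofLp))) ⁻¹'
        (Set.Icc (-δ) δ ×ˢ Metric.closedBall 0 r) := by
    rintro x ⟨hx0, hx⟩
    rw [mem_closedBall_zero_iff] at hx
    refine ⟨abs_le.mp hx0, mem_closedBall_zero_iff.mpr ?_⟩
    have hsplit := norm_sq_eq_sq_apply_zero_add_norm_sq_tail x
    nlinarith [sq_nonneg (x 0), norm_nonneg x, norm_nonneg (WithLp.toLp 2 (Fin.tail x.ofLp))]
  calc _ ≤ _ := measure_mono hsub
    _ = volume (Set.Icc (-δ) δ ×ˢ Metric.closedBall (0 : EuclideanSpace ℝ (Fin n)) r) :=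
      measurePreserving_apply_zero_prod_tail.measure_preimage
        (measurableSet_Icc.prod Metric.isClosed_closedBall.measurableSet).nullMeasurableSet
    _ = _ := by rw [Measure.volume_eq_prod, Measure.prod_prod, Real.volume_Icc]; ring_nf

end EuclideanSpace

lemma OrthonormalBasis.exists_apply_eq {𝕜 E ι : Type*} [RCLike 𝕜] [NormedAddCommGroup E]
    [InnerProductSpace 𝕜 E] [FiniteDimensional 𝕜 E] [Fintype ι]
    (card_ι : Module.finrank 𝕜 E = Fintype.card ι) (i : ι) {u : E} (hu : ‖u‖ = 1) :
    ∃ b : OrthonormalBasis ι 𝕜 E, b i = u := by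
  have hu' : Orthonormal 𝕜 (Set.domRestrict {i} fun _ => u) :=
    ⟨fun _ => hu, fun j k hjk => absurd (Subsingleton.elim j k) hjk⟩
  obtain ⟨b, hb⟩ := hu'.exists_orthonormalBasis_extension_of_card_eq card_ι
  exact ⟨b, hb i rfl⟩

section InnerProductSpace

variable {E : Type*} [NormedAddCommGroup E] [InnerProductSpace ℝ E]

lemma volume_abs_inner_le_inter_closedBall_le
    [FiniteDimensional ℝ E] [MeasurableSpace E] [BorelSpace E]
    {n : ℕ} (hn : Module.finrank ℝ E = n + 1) {u : E} (hu : ‖u‖ = 1) (δ r : ℝ) :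
    volume ({x : E | |⟪x, u⟫| ≤ δ} ∩ Metric.closedBall 0 r)
      ≤ ENNReal.ofReal (2 * δ) * volume (Metric.closedBall (0 : EuclideanSpace ℝ (Fin n)) r) := by
  obtain ⟨b, rfl⟩ :=
    OrthonormalBasis.exists_apply_eq (𝕜 := ℝ) (by simpa using hn) (0 : Fin (n + 1)) hu
  have hpre : {x : E | |⟪x, b 0⟫| ≤ δ} ∩ Metric.closedBall 0 r =
      b.repr ⁻¹' ({y | |y 0| ≤ δ} ∩ Metric.closedBall 0 r) := by
    ext x
    simp [b.repr_apply_apply, real_inner_comm]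
  rw [hpre, b.repr.measurePreserving.measure_preimage (by measurability)]
  exact EuclideanSpace.volume_abs_apply_zero_le_inter_closedBall_le δ r

/-- The envelope `ḡ_δ` of the paper, for the direction `θ = θ0`. -/
noncomputable def scoreEnvelope (θ : E) (δ : ℝ) (x : E) : ℝ :=
  if |⟪x, θ⟫| ≤ ‖x‖ * δ then ‖x‖ * δ else 0

lemma scoreEnvelope_sq_le_indicator (θ : E) {δ : ℝ} (hδ : 0 ≤ δ) {x : E} (hx : ‖x‖ ≤ 1) :
    scoreEnvelope θ δ x ^ 2 ≤
      ({y | |⟪y, θ⟫| ≤ δ} ∩ Metric.closedBall 0 1).indicator (fun _ => δ ^ 2) x := by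
  have hxδ : ‖x‖ * δ ≤ δ := mul_le_of_le_one_left hδ hx
  unfold scoreEnvelope
  split_ifs with h
  · have hmem : x ∈ {y | |⟪y, θ⟫| ≤ δ} ∩ Metric.closedBall 0 1 :=
      ⟨h.trans hxδ, mem_closedBall_zero_iff.mpr hx⟩
    rw [Set.indicator_of_mem hmem]
    gcongr
  · simpa using Set.indicator_nonneg (fun _ _ => sq_nonneg δ) x

end InnerProductSpace

/-- second-moment bound for the envelope function
`ḡ_δ(x) = ‖x‖·δ·1{|⟪x,θ0⟫| ≤ ‖x‖·δ}`: if `μ` has density bounded by `M` with respect to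
Lebesgue measure and is supported on the unit ball, then `∫ ḡ_δ² dμ ≤ 2M·V_{d−1}·δ³`,
where `V_{d−1}` is the Lebesgue volume of the closed unit ball of `ℝ^{d−1}`. -/
theorem envelope_second_moment_bound {d : ℕ} (hd : 1 ≤ d)
    (θ0 : EuclideanSpace ℝ (Fin d)) (hθ0 : ‖θ0‖ = 1)
    (M δ : ℝ) (hM : 0 < M) (hδ : 0 < δ)
    (μ : Measure (EuclideanSpace ℝ (Fin d)))
    (hdom : ∀ A : Set (EuclideanSpace ℝ (Fin d)), MeasurableSet A →
      μ A ≤ ENNReal.ofReal M * volume A)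
    (hsupp : μ {x : EuclideanSpace ℝ (Fin d) | 1 < ‖x‖} = 0) :
    ∫ x, (if |⟪x, θ0⟫| ≤ ‖x‖ * δ then ‖x‖ * δ else 0) ^ 2 ∂μ
      ≤ 2 * M * (volume (Metric.closedBall (0 : EuclideanSpace ℝ (Fin (d - 1))) 1)).toReal
          * δ ^ 3 := by
  obtain ⟨n, rfl⟩ : ∃ n, d = n + 1 := ⟨d - 1, by omega⟩
  set V := volume (Metric.closedBall (0 : EuclideanSpace ℝ (Fin n)) 1)
  set S := {x : EuclideanSpace ℝ (Fin (n + 1)) | |⟪x, θ0⟫| ≤ δ} ∩ Metric.closedBall 0 1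
  have hS : MeasurableSet S := by measurability
  have hμS : μ S ≤ ENNReal.ofReal (M * (2 * δ * V.toReal)) := by
    rw [ENNReal.ofReal_mul hM.le, ENNReal.ofReal_mul (by positivity),
      ENNReal.ofReal_toReal measure_closedBall_lt_top.ne]
    have hslab := volume_abs_inner_le_inter_closedBall_le finrank_euclideanSpace_fin hθ0 δ 1
    exact (hdom S hS).trans (by gcongr)
  have hle : ∀ᵐ x ∂μ, scoreEnvelope θ0 δ x ^ 2 ≤ S.indicator (fun _ => δ ^ 2) x := by
    have hball : ∀ᵐ x ∂μ, ‖x‖ ≤ 1 := by simpa [ae_iff] using hsupp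
    filter_upwards [hball] with x hx using scoreEnvelope_sq_le_indicator θ0 hδ.le hx
  change ∫ x, scoreEnvelope θ0 δ x ^ 2 ∂μ ≤ 2 * M * V.toReal * δ ^ 3
  calc ∫ x, scoreEnvelope θ0 δ x ^ 2 ∂μ ≤ ∫ x, S.indicator (fun _ => δ ^ 2) x ∂μ :=
        integral_mono_of_nonneg (ae_of_all _ fun _ => sq_nonneg _)
          ((integrableOn_const (hμS.trans_lt ENNReal.ofReal_lt_top).ne).integrable_indicator hS)
          hle
    _ = μ.real S * δ ^ 2 := by rw [integral_indicator_const _ hS, smul_eq_mul]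
    _ ≤ M * (2 * δ * V.toReal) * δ ^ 2 := by
        gcongr; exact ENNReal.toReal_le_of_le_ofReal (by positivity) hμS
    _ = 2 * M * V.toReal * δ ^ 3 := by ring
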